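/- Let Σ be a finite alphabet and f : Σ* → ℝ a function computed by some linear representation, and let r be the (finite) rank of the Hankel matrix of f. Let 𝒫, 𝒮 be finite sets of strings with λ ∈ 𝒫, λ ∈ 𝒮 and 𝒫 prefix-closed, and suppose the basis (𝒫, 𝒮) is complete, i.e., the finite sub-block H_B ∈ ℝ^{𝒫×𝒮} with entries H_B(u,v) = f(uv) has rank r. Let P ∈ ℝ^{𝒫×r} and S ∈ ℝ^{r×𝒮} be a rank factorization, H_B = P·S, and let P⁺ ∈ ℝ^{r×𝒫} and S⁺ ∈ ℝ^{𝒮×r} satisfy P⁺·P = I_r and S·S⁺ = I_r. Define, for each σ ∈ Σ, the matrix H_σ ∈ ℝ^{𝒫×𝒮} by H_σ(u,v) = f(uσv), the vector h_{𝒫,λ} ∈ ℝ^{𝒫} by h_{𝒫,λ}(u) = f(u), and the vector h_{λ,𝒮} ∈ ℝ^{𝒮} by h_{λ,𝒮}(v) = f(v). Then the r-dimensional linear representation A = ⟨β₀, (N_σ)_{σ∈Σ}, β∞⟩ given by β₀ᵀ = h_{λ,𝒮}ᵀ S⁺, β∞ = P⁺ h_{𝒫,λ}, and N_σ = P⁺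 H_σ S⁺ computes f: for every string w = σ₁…σₙ, β₀ᵀ N_{σ₁} ⋯ N_{σₙ} β∞ = f(w). In particular A is a minimal weighted automaton computing f. -/

import Mathlib

/-!
Let `h_w = (f (w ++ v))_v` be the Hankel rows. Completeness says the rows of `H_B` already have
rank `r`, the dimension of the whole row space; so restricting rows to the suffixes in `Sb` is
injective on the row space, and its image is spanned by the restricted rows of prefixes in `Pb`.
Hence every restricted row `h_w|Sb` lies in the row space of `H_B = P S`, so that the state
`x_w := h_w|Sb S⁺` satisfies `x_w S = h_w|Sb`; and every column `(f (u ++ s))_u` is a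
combination of the columns indexed by `Sb`, which gives `H_σ = H_B D_σ` with
`h_{wσ}|Sb = h_w|Sb D_σ`. By induction on `w`, `β₀ᵀ N_w = x_w`, and `x_w β∞ = f w`.
Minimality: in a `d`-dimensional representation `h_u` is the image of `α₀ᵀ M_u ∈ ℝ^d` under a
fixed linear map, so the Hankel rank is at most `d`.
-/

open Matrix

/-- The ordered product `M_w = M_{σ₁} ⋯ M_{σₙ}` for a string `w = σ₁…σₙ`. -/
def wordProd {Γ : Type*} {r : ℕ} (M : Γ → Matrix (Fin r) (Fin r) ℝ) (w : List Γ) :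
    Matrix (Fin r) (Fin r) ℝ :=
  (w.map M).prod

/-- The rank of the Hankel matrix of `f`: the dimension of the span of its rows
`v ↦ f (u ++ v)` inside the space of functions `Γ* → ℝ`. -/
noncomputable def hankelRank {Γ : Type*} (f : List Γ → ℝ) : Cardinal :=
  Module.rank ℝ
    ↥(Submodule.span ℝ (Set.range fun u : List Γ => fun v : List Γ => f (u ++ v)))

open Module Submodule

section LinearAlgebra

variable {K V W : Type*} [Field K] [AddCommGroup V] [Module K V] [AddCommGroup W] [Module K W]
  (φ : V →ₗ[K] W) {Q R : Submodule K V} [FiniteDimensional K R]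

theorem map_eq_map_of_finrank_le_finrank_map (hQR : Q ≤ R)
    (h : finrank K R ≤ finrank K (Q.map φ)) : Q.map φ = R.map φ :=
  eq_of_le_of_finrank_le (map_mono hQR) ((finrank_map_le φ R).trans h)

theorem ker_domRestrict_eq_bot_of_finrank_le_finrank_map
    (h : finrank K R ≤ finrank K (R.map φ)) : LinearMap.ker (φ.domRestrict R) = ⊥ := by
  have hsum := LinearMap.finrank_range_add_finrank_ker (φ.domRestrict R)
  rw [LinearMap.range_domRestrict] at hsum
  exact Submodule.finrank_eq_zero.mp (by omega)

theorem exists_comp_eq_on_of_finrank_le_finrank_map {U : Type*} [AddCommGroup U] [Module K U]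
    (h : finrank K R ≤ finrank K (R.map φ)) (ℓ : V →ₗ[K] U) :
    ∃ ψ : W →ₗ[K] U, ∀ x ∈ R, ψ (φ x) = ℓ x := by
  obtain ⟨g, hg⟩ := (φ.domRestrict R).exists_leftInverse_of_injective
    (ker_domRestrict_eq_bot_of_finrank_le_finrank_map φ h)
  refine ⟨ℓ ∘ₗ R.subtype ∘ₗ g, fun x hx => ?_⟩
  simpa using congrArg (ℓ ∘ R.subtype) (LinearMap.congr_fun hg ⟨x, hx⟩)

end LinearAlgebra

theorem wordProd_append {Γ : Type*} {d : ℕ} (M : Γ → Matrix (Fin d) (Fin d) ℝ) (u v : List Γ) :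
    wordProd M (u ++ v) = wordProd M u * wordProd M v := by
  simp [wordProd]

section Hankel

variable {Γ : Type*} (f : List Γ → ℝ)

def hankelRows : Submodule ℝ (List Γ → ℝ) :=
  span ℝ (Set.range fun u v => f (u ++ v))

def hankelBlock (Pb Sb : Finset (List Γ)) : Matrix Pb Sb ℝ :=
  Matrix.of fun u v => f (u.1 ++ v.1)

def hankelRowOn (Sb : Finset (List Γ)) (w : List Γ) : Sb → ℝ :=
  fun v => f (w ++ v.1)

theorem hankelRows_le_range_of_computes {d : ℕ} {α₀ αω : Fin d → ℝ}
    {M : Γ → Matrix (Fin d) (Fin d) ℝ} (hf : ∀ w, f w = α₀ ⬝ᵥ (wordProd M w).mulVec αω) :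
    hankelRows f ≤ LinearMap.range (Matrix.of fun i v => (wordProd M v *ᵥ αω) i).vecMulLinear := by
  refine span_le.mpr ?_
  rintro _ ⟨u, rfl⟩
  refine ⟨vecMul α₀ (wordProd M u), funext fun v => ?_⟩
  change _ = f (u ++ v)
  rw [hf, wordProd_append, ← mulVec_mulVec, dotProduct_mulVec]
  rfl

theorem hankelRank_le_of_computes {d : ℕ} {α₀ αω : Fin d → ℝ}
    {M : Γ → Matrix (Fin d) (Fin d) ℝ} (hf : ∀ w, f w = α₀ ⬝ᵥ (wordProd M w).mulVec αω) :
    hankelRank f ≤ d := by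
  have hle := hankelRows_le_range_of_computes f hf
  have := Submodule.finiteDimensional_of_le hle
  change Module.rank ℝ (hankelRows f) ≤ d
  rw [← finrank_eq_rank, Nat.cast_le]
  exact (finrank_mono hle).trans ((LinearMap.finrank_range_le _).trans (finrank_fin_fun ℝ).le)

end Hankel

section Basis

variable {Γ : Type*} {f : List Γ → ℝ} {r : ℕ} {Pb Sb : Finset (List Γ)}

def hankelRowSpan (f : List Γ → ℝ) (Pb : Finset (List Γ)) : Submodule ℝ (List Γ → ℝ) :=
  span ℝ (Set.range fun (u : Pb) v => f (u.1 ++ v))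

theorem hankelRowSpan_le_hankelRows : hankelRowSpan f Pb ≤ hankelRows f :=
  span_mono (Set.range_comp_subset_range ((↑) : Pb → List Γ) fun u v => f (u ++ v))

theorem map_funLeft_hankelRowSpan :
    (hankelRowSpan f Pb).map (LinearMap.funLeft ℝ ℝ ((↑) : Sb → List Γ)) =
      span ℝ (Set.range (hankelBlock f Pb Sb).row) := by
  rw [hankelRowSpan, map_span, ← Set.range_comp]
  rfl

theorem finiteDimensional_hankelRows (hr : hankelRank f = r) :
    FiniteDimensional ℝ (hankelRows f) :=
  Module.finite_of_rank_eq_nat hr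

theorem finrank_hankelRows_le_finrank_map_hankelRowSpan (hr : hankelRank f = r)
    (hB : (hankelBlock f Pb Sb).rank = r) :
    finrank ℝ (hankelRows f) ≤
      finrank ℝ ((hankelRowSpan f Pb).map (LinearMap.funLeft ℝ ℝ ((↑) : Sb → List Γ))) := by
  rw [map_funLeft_hankelRowSpan, ← rank_eq_finrank_span_row, hB]
  exact (Module.finrank_eq_of_rank_eq hr).le

theorem exists_vecMul_hankelBlock_eq_hankelRowOn (hr : hankelRank f = r)
    (hB : (hankelBlock f Pb Sb).rank = r) (w : List Γ) :
    ∃ c : Pb → ℝ, vecMul c (hankelBlock f Pb Sb) = hankelRowOn f Sb w := by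
  have := finiteDimensional_hankelRows hr
  have hmap := map_eq_map_of_finrank_le_finrank_map _ hankelRowSpan_le_hankelRows
    (finrank_hankelRows_le_finrank_map_hankelRowSpan hr hB)
  have hw : hankelRowOn f Sb w ∈ (hankelRows f).map (LinearMap.funLeft ℝ ℝ ((↑) : Sb → List Γ)) :=
    mem_map_of_mem (subset_span (Set.mem_range_self w))
  rwa [← hmap, map_funLeft_hankelRowSpan, ← range_vecMulLinear] at hw

/-- Evaluation at `s` is a linear functional on the row space, and restriction to `Sb` is injective
there, so the functional factors through the restriction. -/
theorem exists_hankelRowOn_dotProduct_eq (hr : hankelRank f = r)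
    (hB : (hankelBlock f Pb Sb).rank = r) (s : List Γ) :
    ∃ c : Sb → ℝ, ∀ u, hankelRowOn f Sb u ⬝ᵥ c = f (u ++ s) := by
  classical
  have := finiteDimensional_hankelRows hr
  obtain ⟨ψ, hψ⟩ := exists_comp_eq_on_of_finrank_le_finrank_map
    (LinearMap.funLeft ℝ ℝ ((↑) : Sb → List Γ))
    ((finrank_hankelRows_le_finrank_map_hankelRowSpan hr hB).trans
      (finrank_mono (map_mono hankelRowSpan_le_hankelRows))) (LinearMap.proj s)
  refine ⟨fun v => ψ fun v' => if v = v' then 1 else 0, fun u => ?_⟩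
  rw [← LinearMap.proj_apply (R := ℝ) s (fun v => f (u ++ v)), ← hψ _ (subset_span ⟨u, rfl⟩),
    LinearMap.pi_apply_eq_sum_univ]
  rfl

end Basis

section Extraction

variable {Γ : Type*} {f : List Γ → ℝ} {r : ℕ} {Pb Sb : Finset (List Γ)}
  {P : Matrix Pb (Fin r) ℝ} {S : Matrix (Fin r) Sb ℝ} {Pp : Matrix (Fin r) Pb ℝ}
  {Sp : Matrix Sb (Fin r) ℝ}

theorem exists_vecMul_hankelRowOn_eq_append (hr : hankelRank f = r)
    (hB : (hankelBlock f Pb Sb).rank = r) {ι : Type*} (t : ι → List Γ) :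
    ∃ D : Matrix Sb ι ℝ, ∀ u, vecMul (hankelRowOn f Sb u) D = fun i => f (u ++ t i) := by
  choose c hc using fun i => exists_hankelRowOn_dotProduct_eq hr hB (t i)
  exact ⟨Matrix.of fun v i => c i v, fun u => funext fun i => hc i u⟩

theorem vecMul_vecMul_hankelRowOn_mul_hankelBlock (hr : hankelRank f = r)
    (hB : (hankelBlock f Pb Sb).rank = r) (hPS : hankelBlock f Pb Sb = P * S) (hPp : Pp * P = 1)
    (hSp : S * Sp = 1) (w : List Γ) :
    vecMul (vecMul (hankelRowOn f Sb w) Sp) (Pp * hankelBlock f Pb Sb) = hankelRowOn f Sb w := by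
  obtain ⟨c, hc⟩ := exists_vecMul_hankelBlock_eq_hankelRowOn hr hB w
  rw [← hc, hPS, ← Matrix.mul_assoc, hPp, Matrix.one_mul, vecMul_vecMul, vecMul_vecMul,
    ← Matrix.mul_assoc, Matrix.mul_assoc P S Sp, hSp, Matrix.mul_one]

theorem vecMul_vecMul_hankelRowOn_shift (hr : hankelRank f = r)
    (hB : (hankelBlock f Pb Sb).rank = r) (hPS : hankelBlock f Pb Sb = P * S) (hPp : Pp * P = 1)
    (hSp : S * Sp = 1) (w : List Γ) (σ : Γ) :
    vecMul (vecMul (hankelRowOn f Sb w) Sp)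
        (Pp * Matrix.of (fun (u : Pb) (v : Sb) => f (u.1 ++ σ :: v.1)) * Sp) =
      vecMul (hankelRowOn f Sb (w ++ [σ])) Sp := by
  obtain ⟨D, hD⟩ := exists_vecMul_hankelRowOn_eq_append hr hB fun v : Sb => σ :: v.1
  have hshift :
      Matrix.of (fun (u : Pb) (v : Sb) => f (u.1 ++ σ :: v.1)) = hankelBlock f Pb Sb * D :=
    funext fun u => (hD u).symm
  have hrow : vecMul (hankelRowOn f Sb w) D = hankelRowOn f Sb (w ++ [σ]) := by
    rw [hD]; funext v; simp [hankelRowOn]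
  rw [hshift, ← hrow, ← Matrix.mul_assoc, Matrix.mul_assoc, ← vecMul_vecMul, ← vecMul_vecMul,
    vecMul_vecMul_hankelRowOn_mul_hankelBlock hr hB hPS hPp hSp]

theorem vecMul_vecMul_hankelRowOn_dotProduct (hr : hankelRank f = r)
    (hB : (hankelBlock f Pb Sb).rank = r) (hPS : hankelBlock f Pb Sb = P * S) (hPp : Pp * P = 1)
    (hSp : S * Sp = 1) (w : List Γ) :
    vecMul (hankelRowOn f Sb w) Sp ⬝ᵥ Pp *ᵥ (fun u : Pb => f u.1) = f w := by
  obtain ⟨c, hc⟩ := exists_hankelRowOn_dotProduct_eq hr hB []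
  have hcol : (fun u : Pb => f u.1) = hankelBlock f Pb Sb *ᵥ c := by
    funext u
    exact (List.append_nil u.1 ▸ hc u).symm
  rw [hcol, mulVec_mulVec, dotProduct_mulVec,
    vecMul_vecMul_hankelRowOn_mul_hankelBlock hr hB hPS hPp hSp, hc, List.append_nil]

theorem vecMul_wordProd_eq (hr : hankelRank f = r)
    (hB : (hankelBlock f Pb Sb).rank = r) (hPS : hankelBlock f Pb Sb = P * S) (hPp : Pp * P = 1)
    (hSp : S * Sp = 1) (w : List Γ) :
    vecMul (vecMul (fun v : Sb => f v.1) Sp)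
        (wordProd (fun σ => Pp * Matrix.of (fun (u : Pb) (v : Sb) => f (u.1 ++ σ :: v.1)) * Sp) w) =
      vecMul (hankelRowOn f Sb w) Sp := by
  induction w using List.reverseRecOn with
  | nil =>
    rw [wordProd, List.map_nil, List.prod_nil, vecMul_one]
    rfl
  | append_singleton w σ ih =>
    rw [wordProd_append, ← vecMul_vecMul, ih, wordProd, List.map_singleton, List.prod_singleton,
      vecMul_vecMul_hankelRowOn_shift hr hB hPS hPp hSp]

end Extraction

theorem statement9_general {Γ : Type*} (f : List Γ → ℝ)
    -- `r` is the (finite) rank of the Hankel matrix of `f`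
    (r : ℕ) (hr : hankelRank f = r)
    -- the basis `(Pb, Sb)`
    (Pb Sb : Finset (List Γ))
    -- completeness: the sub-block has rank `r`
    (hcomplete : (Matrix.of fun (u : ↥Pb) (v : ↥Sb) => f (u.1 ++ v.1)).rank = r)
    -- rank factorization `H_B = P * S` with one-sided inverses
    (P : Matrix ↥Pb (Fin r) ℝ) (S : Matrix (Fin r) ↥Sb ℝ)
    (hPS : (Matrix.of fun (u : ↥Pb) (v : ↥Sb) => f (u.1 ++ v.1)) = P * S)
    (Pp : Matrix (Fin r) ↥Pb ℝ) (hPp : Pp * P = 1)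
    (Sp : Matrix ↥Sb (Fin r) ℝ) (hSp : S * Sp = 1) :
    -- the extracted representation
    (∀ w : List Γ,
      (Matrix.vecMul (fun v : ↥Sb => f v.1) Sp) ⬝ᵥ
        (wordProd
            (fun σ => Pp * (Matrix.of fun (u : ↥Pb) (v : ↥Sb) => f (u.1 ++ σ :: v.1)) * Sp)
            w).mulVec
          (Pp.mulVec fun u : ↥Pb => f u.1) = f w) ∧
    -- minimality: no representation of dimension smaller than `r` computes `f`
    (∀ (r' : ℕ) (β₀ βω : Fin r' → ℝ) (M' : Γ → Matrix (Fin r') (Fin r') ℝ),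
      (∀ w : List Γ, f w = β₀ ⬝ᵥ (wordProd M' w).mulVec βω) → r ≤ r') := by
  refine ⟨fun w => ?_, fun r' β₀ βω M' hf' => ?_⟩
  · rw [dotProduct_mulVec, vecMul_wordProd_eq hr hcomplete hPS hPp hSp]
    exact vecMul_vecMul_hankelRowOn_dotProduct hr hcomplete hPS hPp hSp w
  · exact_mod_cast hr ▸ hankelRank_le_of_computes f hf'

theorem statement9 {Γ : Type*} [Fintype Γ] (f : List Γ → ℝ)
    -- `f` is computed by some linear representation
    (d : ℕ) (α₀ αω : Fin d → ℝ) (M : Γ → Matrix (Fin d) (Fin d) ℝ)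
    (hf : ∀ w : List Γ, f w = α₀ ⬝ᵥ (wordProd M w).mulVec αω)
    -- `r` is the (finite) rank of the Hankel matrix of `f`
    (r : ℕ) (hr : hankelRank f = r)
    -- the basis `(Pb, Sb)`
    (Pb Sb : Finset (List Γ))
    (hPε : [] ∈ Pb) (hSε : [] ∈ Sb)
    (hprefix : ∀ w ∈ Pb, ∀ u : List Γ, u <+: w → u ∈ Pb)
    -- completeness: the sub-block has rank `r`
    (hcomplete : (Matrix.of fun (u : ↥Pb) (v : ↥Sb) => f (u.1 ++ v.1)).rank = r)
    -- rank factorization `H_B = P * S` with one-sided inverses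
    (P : Matrix ↥Pb (Fin r) ℝ) (S : Matrix (Fin r) ↥Sb ℝ)
    (hPS : (Matrix.of fun (u : ↥Pb) (v : ↥Sb) => f (u.1 ++ v.1)) = P * S)
    (Pp : Matrix (Fin r) ↥Pb ℝ) (hPp : Pp * P = 1)
    (Sp : Matrix ↥Sb (Fin r) ℝ) (hSp : S * Sp = 1) :
    -- the extracted representation
    (∀ w : List Γ,
      (Matrix.vecMul (fun v : ↥Sb => f v.1) Sp) ⬝ᵥ
        (wordProd
            (fun σ => Pp * (Matrix.of fun (u : ↥Pb) (v : ↥Sb) => f (u.1 ++ σ :: v.1)) * Sp)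
            w).mulVec
          (Pp.mulVec fun u : ↥Pb => f u.1) = f w) ∧
    -- minimality: no representation of dimension smaller than `r` computes `f`
    (∀ (r' : ℕ) (β₀ βω : Fin r' → ℝ) (M' : Γ → Matrix (Fin r') (Fin r') ℝ),
      (∀ w : List Γ, f w = β₀ ⬝ᵥ (wordProd M' w).mulVec βω) → r ≤ r') :=
  statement9_general f r hr Pb Sb hcomplete P S hPS Pp hPp Sp hSp
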